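/- Let C be a linear code of length n over a finite chain ring with p^s elements, with weight distributions A_j for C and A_j^\perp for C^\perp. Then for every 0 \le \nu \le n: \sum_{j=0}^{n-\nu} \binom{n-j}{\nu} A_j = (|C| / p^{s\nu}) \sum_{j=0}^{\nu} \binom{n-j}{n-\nu} A_j^\perp. -/

import Mathlib

/-!
Fix an additive character `ψ` of `R` that is primitive (`x ↦ ψ (r * x)` is nontrivial for every
`r ≠ 0`); a finite chain ring has one, since its minimal nonzero ideal lies in every nonzero ideal.
Orthogonality of `w ↦ ψ (c ⬝ᵥ w)` on a submodule `W`, summed over `c ∈ C` in both orders, gives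
`|W| · |C ∩ W^⊥| = |C| · |W ∩ C^⊥|`. For `W` the vectors supported on a `ν`-set `T`, this reads
`|R|^ν · |{c ∈ C : c vanishes on T}| = |C| · |{d ∈ C^⊥ : d vanishes off T}|`; summing over all `T`
and counting the pairs `(c, T)` by the weight of `c` yields the binomial moments on both sides.
-/

open Matrix Finset

/-- The Hamming weight of a vector: number of nonzero entries. -/
noncomputable def wt {R : Type*} [Zero R] {n : ℕ} (v : Fin n → R) : ℕ :=
  Nat.card {i : Fin n // v i ≠ 0}

/-- Minimum Hamming distance (= minimum weight of a nonzero codeword). -/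
noncomputable def minDist {R : Type*} [Zero R] {n : ℕ} (C : Set (Fin n → R)) : ℕ :=
  sInf {w | ∃ c ∈ C, c ≠ 0 ∧ wt c = w}

/-- Dual code w.r.t. the standard inner product. -/
def dualCode {R : Type*} [CommRing R] {n : ℕ} (C : Submodule R (Fin n → R)) :
    Submodule R (Fin n → R) where
  carrier := {v | ∀ c ∈ C, ∑ i, v i * c i = 0}
  add_mem' := by
    intro a b ha hb c hc
    simp only [Set.mem_setOf_eq] at *
    simp [Pi.add_apply, add_mul, Finset.sum_add_distrib, ha c hc, hb c hc]
  zero_mem' := by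
    intro c hc
    simp
  smul_mem' := by
    intro r v hv c hc
    simp only [Set.mem_setOf_eq] at *
    simp [Pi.smul_apply, smul_eq_mul, mul_assoc, ← Finset.mul_sum, hv c hc]

/-- The rank of a code: minimal number of generators. -/
noncomputable def rankCode {R M : Type*} [Ring R] [AddCommGroup M] [Module R M] (C : Submodule R M) : ℕ :=
  sInf {k | ∃ S : Finset M, S.card = k ∧ Submodule.span R (S : Set M) = C}

/-- `H` is a parity-check matrix for `C` : its kernel is exactly `C`. -/
def IsParityCheck {R : Type*} [CommRing R] {m n : ℕ} (H : Matrix (Fin m) (Fin n) R)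
    (C : Submodule R (Fin n → R)) : Prop :=
  ∀ v, v ∈ C ↔ H.mulVec v = 0

/-- A matrix (with rows indexed by `m`, columns by `ι`) has type `(t 0, …, t (s-1))` if exactly
`t i` of its rows are divisible by `γ^i` but not by `γ^(i+1)`. -/
def MatrixType {R : Type*} [CommRing R] {m ι : Type*} (γ : R) (s : ℕ)
    (M : m → ι → R) (t : ℕ → ℕ) : Prop :=
  ∀ i < s, Nat.card {r : m // (∃ u, M r = γ ^ i • u) ∧ ¬ ∃ u, M r = γ ^ (i + 1) • u} = t i

/-- A code has type `(k 0, …, k (s-1))` if it admits a generator matrix (rows span the code,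
no row is a combination of the others) of that row type. -/
def CodeHasType {R : Type*} [CommRing R] {n : ℕ} (γ : R) (s : ℕ)
    (C : Submodule R (Fin n → R)) (k : ℕ → ℕ) : Prop :=
  ∃ G : Matrix (Fin (∑ i ∈ Finset.range s, k i)) (Fin n) R,
    Submodule.span R (Set.range G) = C ∧
    (∀ j, G j ∉ Submodule.span R (Set.range G \ {G j})) ∧
    MatrixType γ s G k

/-- The weight distribution of a code. -/
noncomputable def weightDist {R : Type*} [CommRing R] {n : ℕ} (C : Submodule R (Fin n → R)) (l : ℕ) : ℕ :=
  Nat.card {c : Fin n → R // c ∈ C ∧ wt c = l}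

/-- A ring is a chain ring if its ideals are linearly ordered by inclusion. -/
def IsChainRing (R : Type*) [Ring R] : Prop := ∀ I J : Ideal R, I ≤ J ∨ J ≤ I

/-- `γ` generates the (unique) maximal ideal of `R`. -/
def MaxIdealGen {R : Type*} [CommRing R] (γ : R) : Prop :=
  Ideal.span {γ} ≠ ⊤ ∧ ∀ I : Ideal R, I ≠ ⊤ → I ≤ Ideal.span {γ}

theorem IsChainRing.exists_ne_zero_forall_dvd {R : Type*} [CommRing R] [Finite R]
    [Nontrivial R] (hR : IsChainRing R) : ∃ y : R, y ≠ 0 ∧ ∀ r : R, r ≠ 0 → r ∣ y := by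
  obtain ⟨I, ⟨y, hy, rfl⟩, hmin⟩ := WellFounded.has_min wellFounded_lt
    {I : Ideal R | ∃ y : R, y ≠ 0 ∧ I = Ideal.span {y}} ⟨_, 1, one_ne_zero, rfl⟩
  refine ⟨y, hy, fun r hr => Ideal.mem_span_singleton.mp ?_⟩
  rcases hR (Ideal.span {y}) (Ideal.span {r}) with h | h
  · exact h (Ideal.mem_span_singleton_self y)
  · rw [h.eq_of_not_lt (hmin _ ⟨r, hr, rfl⟩)]
    exact Ideal.mem_span_singleton_self y

theorem IsChainRing.exists_isPrimitive_addChar {R : Type*} [CommRing R] [Finite R]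
    (hR : IsChainRing R) : ∃ ψ : AddChar R ℂ, ψ.IsPrimitive := by
  cases subsingleton_or_nontrivial R with
  | inl _ => exact ⟨1, fun a ha => absurd (Subsingleton.elim a 0) ha⟩
  | inr _ =>
    obtain ⟨y, hy, hdvd⟩ := hR.exists_ne_zero_forall_dvd
    obtain ⟨ψ, hψ⟩ := AddChar.exists_apply_ne_zero.mpr hy
    refine ⟨ψ, fun a ha hshift => ?_⟩
    obtain ⟨x, rfl⟩ := hdvd a ha
    exact hψ (by simpa using DFunLike.congr_fun hshift x)

theorem AddChar.sum_apply_dotProduct {R : Type*} [CommRing R] [Fintype R] {ψ : AddChar R ℂ}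
    (hψ : ψ.IsPrimitive) {ι : Type*} [Fintype ι] (D : Submodule R (ι → R)) [Fintype D]
    (v : ι → R) [Decidable (∀ d ∈ D, v ⬝ᵥ d = 0)] :
    ∑ d : D, ψ (v ⬝ᵥ d) = if ∀ d ∈ D, v ⬝ᵥ d = 0 then (Fintype.card D : ℂ) else 0 := by
  let φ : AddChar D ℂ := ψ.compAddMonoidHom
    ((dotProductBilin R R v).comp D.subtype).toAddMonoidHom
  have hφ : φ = 0 ↔ ∀ d ∈ D, v ⬝ᵥ d = 0 := by
    constructor
    · intro h d hd
      by_contra hne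
      obtain ⟨x, hx⟩ := AddChar.ne_one_iff.mp (hψ hne)
      have := DFunLike.congr_fun h (x • ⟨d, hd⟩)
      simp only [φ, AddChar.compAddMonoidHom_apply] at this
      apply hx
      simpa [dotProduct_smul, mul_comm] using this
    · intro h
      ext d
      simp [φ, h d d.2]
  classical
  change ∑ d, φ d = _
  rw [AddChar.sum_eq_ite φ]
  simp only [hφ]

theorem Submodule.card_inf_eq_card_filter {R M : Type*} [Semiring R] [AddCommMonoid M]
    [Module R M] (C W : Submodule R M) [Fintype C] [DecidablePred (· ∈ W)] :
    Nat.card ↥(C ⊓ W) = #{c : C | (c : M) ∈ W} := by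
  rw [← Fintype.card_subtype, ← Nat.card_eq_fintype_card]
  exact Nat.card_congr (Equiv.subtypeSubtypeEquivSubtypeInter (· ∈ C) (· ∈ W)).symm

theorem mem_dualCode {R : Type*} [CommRing R] {n : ℕ} {C : Submodule R (Fin n → R)}
    {v : Fin n → R} : v ∈ dualCode C ↔ ∀ c ∈ C, v ⬝ᵥ c = 0 :=
  Iff.rfl

theorem sum_sum_addChar_dotProduct {R : Type*} [CommRing R] [Fintype R] {ψ : AddChar R ℂ}
    (hψ : ψ.IsPrimitive) {n : ℕ} (C W : Submodule R (Fin n → R)) [Fintype C] [Fintype W] :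
    ∑ c : C, ∑ w : W, ψ ((c : Fin n → R) ⬝ᵥ w) = Nat.card W * Nat.card ↥(C ⊓ dualCode W) := by
  classical
  simp only [AddChar.sum_apply_dotProduct hψ W, ← mem_dualCode, Finset.sum_ite, sum_const_zero,
    add_zero, sum_const, nsmul_eq_mul, Submodule.card_inf_eq_card_filter C,
    Nat.card_eq_fintype_card, mul_comm]

theorem card_mul_card_inf_dualCode {R : Type*} [CommRing R] [Fintype R] {ψ : AddChar R ℂ}
    (hψ : ψ.IsPrimitive) {n : ℕ} (C W : Submodule R (Fin n → R)) :
    Nat.card W * Nat.card ↥(C ⊓ dualCode W) = Nat.card C * Nat.card ↥(W ⊓ dualCode C) := by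
  classical
  have hCW := sum_sum_addChar_dotProduct hψ C W
  have hWC := sum_sum_addChar_dotProduct hψ W C
  rw [Finset.sum_comm] at hWC
  simp_rw [dotProduct_comm] at hWC
  exact_mod_cast hCW.symm.trans hWC

def vanishingOn (R : Type*) [Semiring R] {ι : Type*} (T : Finset ι) : Submodule R (ι → R) :=
  Submodule.pi (T : Set ι) fun _ => ⊥

@[simp]
theorem mem_vanishingOn {R : Type*} [Semiring R] {ι : Type*} {T : Finset ι} {v : ι → R} :
    v ∈ vanishingOn R T ↔ ∀ i ∈ T, v i = 0 := by
  simp [vanishingOn]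

theorem card_vanishingOn (R : Type*) [Semiring R] [Fintype R] {ι : Type*} [Fintype ι]
    [DecidableEq ι] (T : Finset ι) : Nat.card (vanishingOn R T) = Fintype.card R ^ #Tᶜ := by
  classical
  have hset : (vanishingOn R T : Set (ι → R))
      = ↑(Fintype.piFinset fun i => if i ∈ T then ({0} : Finset R) else univ) := by
    ext v
    simp only [SetLike.mem_coe, mem_vanishingOn, Fintype.mem_piFinset]
    refine forall_congr' fun i => ?_
    split_ifs <;> simp [*]
  rw [← SetLike.coe_sort_coe, hset, Nat.card_coe_set_eq, Set.ncard_coe_finset,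
    Fintype.card_piFinset]
  simp only [apply_ite card, card_singleton, card_univ, prod_ite, prod_const_one, prod_const,
    one_mul, filter_not, filter_mem_eq_inter, univ_inter, compl_eq_univ_sdiff]

theorem dualCode_vanishingOn_compl {R : Type*} [CommRing R] {n : ℕ} (T : Finset (Fin n)) :
    dualCode (vanishingOn R Tᶜ) = vanishingOn R T := by
  ext v
  simp only [mem_dualCode, mem_vanishingOn, mem_compl]
  constructor
  · intro h i hi
    simpa using h (Pi.single i 1) (fun j hj => Pi.single_eq_of_ne (by rintro rfl; exact hj hi) 1)
  · intro h w hw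
    refine sum_eq_zero fun i _ => ?_
    by_cases hi : i ∈ T
    · rw [h i hi, zero_mul]
    · rw [hw i hi, mul_zero]

theorem wt_eq_card_filter {R : Type*} [Zero R] [DecidableEq R] {n : ℕ} (v : Fin n → R) :
    wt v = #{i | v i ≠ 0} := by
  rw [wt, Nat.card_eq_fintype_card, Fintype.card_subtype]

theorem wt_le {R : Type*} [Zero R] {n : ℕ} (v : Fin n → R) : wt v ≤ n := by
  classical
  simpa [wt_eq_card_filter] using card_filter_le univ fun i => v i ≠ 0

theorem card_filter_eq_zero_eq_sub_wt {R : Type*} [Zero R] [DecidableEq R] {n : ℕ}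
    (v : Fin n → R) :
    #{i | v i = 0} = n - wt v := by
  have h := card_filter_add_card_filter_not (s := univ) fun i => v i = 0
  rw [card_univ, Fintype.card_fin] at h
  rw [wt_eq_card_filter]
  simp only [ne_eq] at h ⊢
  omega

theorem sum_mul_weightDist {R : Type*} [CommRing R] [Fintype R] {n : ℕ}
    (D : Submodule R (Fin n → R)) [Fintype D] (f : ℕ → ℕ) :
    ∑ j ∈ range (n + 1), f j * weightDist D j = ∑ c : D, f (wt (c : Fin n → R)) := by
  classical
  rw [← sum_fiberwise_of_maps_to (g := fun c : D => wt (c : Fin n → R)) (t := range (n + 1))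
    fun c _ => mem_range_succ_iff.mpr (wt_le _)]
  refine sum_congr rfl fun j _ => ?_
  have hcard : weightDist D j = #{c : D | wt (c : Fin n → R) = j} := by
    rw [weightDist, ← Fintype.card_subtype, ← Nat.card_eq_fintype_card]
    exact Nat.card_congr (Equiv.subtypeSubtypeEquivSubtypeInter (· ∈ D) fun c => wt c = j).symm
  rw [hcard, mul_comm, ← smul_eq_mul, ← sum_const]
  exact sum_congr rfl fun c hc => by rw [(mem_filter.mp hc).2]

theorem card_filter_powersetCard_forall_eq_zero {R : Type*} [Zero R] [DecidableEq R] {n : ℕ}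
    (v : Fin n → R) (μ : ℕ) :
    #{T ∈ powersetCard μ univ | ∀ i ∈ T, v i = 0} = (n - wt v).choose μ := by
  rw [← card_filter_eq_zero_eq_sub_wt, ← card_powersetCard]
  congr 1
  ext T
  simp only [mem_filter, mem_powersetCard, true_and, subset_iff, mem_univ]
  tauto

theorem sum_choose_mul_weightDist {R : Type*} [CommRing R] [Fintype R] {n : ℕ}
    (D : Submodule R (Fin n → R)) (μ : ℕ) :
    ∑ j ∈ range (n + 1), (n - j).choose μ * weightDist D j
      = ∑ T ∈ powersetCard μ univ, Nat.card ↥(D ⊓ vanishingOn R T) := by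
  classical
  simp only [sum_mul_weightDist, Submodule.card_inf_eq_card_filter D, mem_vanishingOn,
    ← card_filter_powersetCard_forall_eq_zero, card_filter]
  exact sum_comm

theorem sum_range_choose_mul_weightDist {R : Type*} [CommRing R] [Fintype R] {n : ℕ}
    (D : Submodule R (Fin n → R)) {μ : ℕ} (hμ : μ ≤ n) :
    ∑ j ∈ range (n - μ + 1), (n - j).choose μ * weightDist D j
      = ∑ T ∈ powersetCard μ univ, Nat.card ↥(D ⊓ vanishingOn R T) := by
  rw [← sum_choose_mul_weightDist]
  refine sum_subset (range_subset_range.mpr (by omega)) fun j hjn hj => ?_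
  rw [mem_range] at hjn hj
  rw [Nat.choose_eq_zero_of_lt (by omega), zero_mul]

theorem sum_powersetCard_compl {α M : Type*} [Fintype α] [DecidableEq α] [AddCommMonoid M]
    {k m : ℕ} (hkm : k + m = Fintype.card α) (f : Finset α → M) :
    ∑ T ∈ powersetCard m univ, f T = ∑ T ∈ powersetCard k univ, f Tᶜ := by
  refine sum_nbij' compl compl (fun T hT => ?_) (fun T hT => ?_) (fun T _ => compl_compl T)
    (fun T _ => compl_compl T) (fun T _ => by rw [compl_compl])
  all_goals
    rw [mem_powersetCard_univ] at hT ⊢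
    rw [card_compl, hT]
    omega

theorem stmt_13 {R : Type*} [CommRing R] [Fintype R] (hR : IsChainRing R)
    (p s : ℕ) (hcard : Nat.card R = p ^ s)
    {n : ℕ} (C : Submodule R (Fin n → R)) (ν : ℕ) (hν : ν ≤ n) :
    (∑ j ∈ Finset.range (n - ν + 1), (n - j).choose ν * weightDist C j) * p ^ (s * ν)
      = Nat.card C *
        ∑ j ∈ Finset.range (ν + 1), (n - j).choose (n - ν) * weightDist (dualCode C) j := by
  classical
  obtain ⟨ψ, hψ⟩ := hR.exists_isPrimitive_addChar
  have hdual : ∑ j ∈ range (ν + 1), (n - j).choose (n - ν) * weightDist (dualCode C) j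
      = ∑ T ∈ powersetCard ν univ, Nat.card ↥(vanishingOn R Tᶜ ⊓ dualCode C) := by
    rw [show ν + 1 = n - (n - ν) + 1 by omega, sum_range_choose_mul_weightDist _ (n.sub_le ν),
      sum_powersetCard_compl (k := ν) (by simp [hν])]
    simp only [inf_comm]
  rw [sum_range_choose_mul_weightDist C hν, hdual, sum_mul, mul_sum]
  refine sum_congr rfl fun T hT => ?_
  have hW : Nat.card (vanishingOn R Tᶜ) = p ^ (s * ν) := by
    rw [card_vanishingOn, compl_compl, mem_powersetCard_univ.mp hT, ← Nat.card_eq_fintype_card,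
      hcard, pow_mul]
  rw [← hW, mul_comm, ← dualCode_vanishingOn_compl T, card_mul_card_inf_dualCode hψ]
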